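/- arXiv:1602.00719 — 3 statements merged into one kernel-verified Lean document; each statement's English description precedes it below -/
import Mathlib

section
/- There exists a universal constant C > 0 with the following property. Let p ≥ 2, let X = (X_1,…,X_p) be a mean-zero random vector with max_{i≤p} E[X_i^4] < ∞, set σ_{ij} = E[X_i X_j], and let v > 0 satisfy v² ≥ max_{i,j≤p} Var(X_i X_j). Let X^{(1)},…,X^{(n)} be n i.i.d. copies of X, let δ ∈ (0,1), set α = sqrt(n v² / log(p²/δ)), and for each pair (i,j) let σ̂_{ij} be any minimizer over x ∈ ℝ of x ↦ Σ_{t=1}^n l_α(X_i^{(t)} X_j^{(t)} − x). Then whenever n ≥ C·log(p/δ), with probability at least 1 − δ, max_{i,j≤p} |σ̂_{ij} − σ_{ij}| ≤ C·v·sqrt((log p + log(1/δ))/n). -/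
/-!
The estimate `σ̂ᵢⱼ` is controlled through the score `ψ = huberClip α`, half the derivative of the
convex Huber loss: if `σ̂ᵢⱼ > θ` then `∑ₜ ψ(Zₜ - θ) ≥ 0`, where `Zₜ = Xᵢ⁽ᵗ⁾ Xⱼ⁽ᵗ⁾`. Since
`|ψ| ≤ α` and `|ψ(x) - x| ≤ x² / α`, at `θ = σᵢⱼ + 7v²/α` the summands `ψ(Zₜ - θ)` have mean at
most `-5v²/α` and variance at most `2v²`, so a Chernoff bound at parameter `1/(2α)` bounds the
probability of `σ̂ᵢⱼ > θ` by `exp(-2nv²/α²)`, which is `(δ/p²)²` for the prescribed `α`. The loss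
is even, so the lower tail is the upper tail of `-Z`, and a union bound over the `p²` entries
concludes.
-/

open MeasureTheory Filter ProbabilityTheory

/-- The Huber loss with parameter `α`: `l_α(x) = x²` if `|x| ≤ α`,
and `2α|x| − α²` otherwise. -/
noncomputable def huberLoss (α x : ℝ) : ℝ := if |x| ≤ α then x ^ 2 else 2 * α * |x| - α ^ 2

/-- Half the derivative of `huberLoss α`. -/
noncomputable def huberClip (α x : ℝ) : ℝ := max (-α) (min α x)

def IsHuberEstimate {ι : Type*} [Fintype ι] (α : ℝ) (z : ι → ℝ) (θ : ℝ) : Prop :=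
  ∀ x, ∑ i, huberLoss α (z i - θ) ≤ ∑ i, huberLoss α (z i - x)

section Huber

variable {α : ℝ}

lemma abs_huberClip_le (hα : 0 ≤ α) (x : ℝ) : |huberClip α x| ≤ α :=
  abs_le.2 ⟨le_max_left _ _, max_le (by linarith) (min_le_left _ _)⟩

lemma huberClip_cases (hα : 0 ≤ α) (x : ℝ) :
    (x < -α ∧ huberClip α x = -α) ∨ (|x| ≤ α ∧ huberClip α x = x) ∨
      (α < x ∧ huberClip α x = α) := by
  unfold huberClip
  rcases lt_or_ge x (-α) with h | h
  · exact Or.inl ⟨h, by rw [min_eq_right (by linarith), max_eq_left h.le]⟩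
  rcases le_or_gt x α with h' | h'
  · exact Or.inr (Or.inl ⟨abs_le.2 ⟨h, h'⟩, by rw [min_eq_right h', max_eq_right h]⟩)
  · exact Or.inr (Or.inr ⟨h', by rw [min_eq_left h'.le, max_eq_right (by linarith)]⟩)

lemma abs_huberClip_le_abs (hα : 0 ≤ α) (x : ℝ) : |huberClip α x| ≤ |x| := by
  rcases huberClip_cases hα x with ⟨h, e⟩ | ⟨-, e⟩ | ⟨h, e⟩ <;> rw [e]
  · rw [abs_neg, abs_of_nonneg hα, abs_of_neg (by linarith)]; linarith
  · rw [abs_of_nonneg hα, abs_of_pos (by linarith)]; exact h.le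

lemma abs_huberClip_sub_le (hα : 0 < α) (x : ℝ) : |huberClip α x - x| ≤ x ^ 2 / α := by
  rw [le_div_iff₀ hα]
  rcases huberClip_cases hα.le x with ⟨h, e⟩ | ⟨-, e⟩ | ⟨h, e⟩ <;> rw [e]
  · rw [abs_of_nonneg (by linarith)]; nlinarith
  · simpa using sq_nonneg x
  · rw [abs_of_nonpos (by linarith)]; nlinarith

lemma measurable_huberClip : Measurable (huberClip α) :=
  measurable_const.max (measurable_const.min measurable_id)

lemma huberLoss_neg (α x : ℝ) : huberLoss α (-x) = huberLoss α x := by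
  simp [huberLoss]

lemma huberLoss_eq (hα : 0 ≤ α) (x : ℝ) :
    huberLoss α x = 2 * huberClip α x * x - huberClip α x ^ 2 := by
  unfold huberLoss
  rcases huberClip_cases hα x with ⟨h, e⟩ | ⟨h, e⟩ | ⟨h, e⟩ <;> rw [e]
  · rw [if_neg (by rw [abs_le]; intro h'; linarith [h'.1]), abs_of_neg (by linarith)]; ring
  · rw [if_pos h]; ring
  · rw [if_neg (by rw [abs_le]; intro h'; linarith [h'.2]), abs_of_pos (by linarith)]

/-- Together with `huberLoss_eq`: `huberLoss α y = max_{|c| ≤ α} (2cy - c²)`, attained at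
`c = huberClip α y`; hence the loss is convex with slope `2 * huberClip α`. -/
lemma two_mul_mul_sub_sq_le_huberLoss {c : ℝ} (hc : |c| ≤ α) (y : ℝ) :
    2 * c * y - c ^ 2 ≤ huberLoss α y := by
  unfold huberLoss
  split_ifs with hy
  · nlinarith [sq_nonneg (y - c)]
  · nlinarith [abs_mul_abs_self c, abs_nonneg c, le_abs_self (c * y), abs_mul c y]

lemma huberLoss_add_two_mul_huberClip_le (hα : 0 ≤ α) (x y : ℝ) :
    huberLoss α x + 2 * huberClip α x * (y - x) ≤ huberLoss α y := by
  have := two_mul_mul_sub_sq_le_huberLoss (abs_huberClip_le hα x) y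
  rw [huberLoss_eq hα x]
  linarith

namespace IsHuberEstimate

variable {ι : Type*} [Fintype ι] {z : ι → ℝ} {θhat : ℝ}

lemma neg (h : IsHuberEstimate α z θhat) : IsHuberEstimate α (-z) (-θhat) := fun x => by
  have hflip (a b : ℝ) : huberLoss α (-a - b) = huberLoss α (a - -b) := by
    rw [← huberLoss_neg]; ring_nf
  simpa only [Pi.neg_apply, hflip, neg_neg] using h (-x)

lemma sum_huberClip_nonneg_of_lt (h : IsHuberEstimate α z θhat) (hα : 0 ≤ α) {θ : ℝ}
    (hθ : θ < θhat) : 0 ≤ ∑ i, huberClip α (z i - θ) := by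
  have hconvex : ∑ i, huberLoss α (z i - θ) + 2 * (θ - θhat) * ∑ i, huberClip α (z i - θ) ≤
      ∑ i, huberLoss α (z i - θhat) := by
    rw [Finset.mul_sum, ← Finset.sum_add_distrib]
    refine Finset.sum_le_sum fun i _ => ?_
    have := huberLoss_add_two_mul_huberClip_le hα (z i - θ) (z i - θhat)
    linarith
  nlinarith [h θ]

end IsHuberEstimate

end Huber

lemma Real.exp_le_one_add_add_sq {x : ℝ} (hx : x ≤ 1) : Real.exp x ≤ 1 + x + x ^ 2 := by
  rcases le_or_gt x (-1) with h | h
  · nlinarith [Real.exp_le_one_iff.2 (h.trans (by norm_num) : x ≤ 0)]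
  · have := (abs_sub_le_iff.1 (Real.exp_bound (abs_le.2 ⟨h.le, hx⟩) two_pos)).1
    simp [Finset.sum_range, Fin.sum_univ_two] at this
    nlinarith [sq_abs x]

variable {Ω : Type*} [MeasurableSpace Ω] {μ : Measure Ω}

lemma memLp_two_mul_of_integrable_pow_four {f g : Ω → ℝ} (hf : AEStronglyMeasurable f μ)
    (hg : AEStronglyMeasurable g μ) (hf4 : Integrable (fun ω => f ω ^ 4) μ)
    (hg4 : Integrable (fun ω => g ω ^ 4) μ) : MemLp (fun ω => f ω * g ω) 2 μ :=
  (memLp_two_iff_integrable_sq (hf.mul hg)).2 <|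
    ((hf4.add hg4).div_const 2).mono' ((hf.mul hg).pow 2) <| ae_of_all _ fun ω => by
      rw [Real.norm_eq_abs, abs_of_nonneg (sq_nonneg _)]
      simp only [Pi.add_apply, Pi.mul_apply]
      nlinarith [sq_nonneg (f ω ^ 2 - g ω ^ 2)]

lemma measure_iUnion₂_le_ofReal_card_sq_mul {κ : Type*} [Fintype κ] {s : κ → κ → Set Ω}
    {ε : ℝ} (h : ∀ i j, μ (s i j) ≤ ENNReal.ofReal ε) :
    μ (⋃ i, ⋃ j, s i j) ≤ ENNReal.ofReal (Fintype.card κ ^ 2 * ε) :=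
  calc μ (⋃ i, ⋃ j, s i j) ≤ ∑ i, ∑ j, μ (s i j) :=
        (measure_iUnion_fintype_le _ _).trans (Finset.sum_le_sum fun i _ =>
          measure_iUnion_fintype_le _ _)
    _ ≤ ∑ _i : κ, ∑ _j : κ, ENNReal.ofReal ε := by gcongr; exact h _ _
    _ = ENNReal.ofReal (Fintype.card κ ^ 2 * ε) := by
        rw [ENNReal.ofReal_mul (by positivity)]
        simp [Finset.sum_const, nsmul_eq_mul, sq, mul_assoc]

section Probability

variable [IsProbabilityMeasure μ]

lemma ofReal_one_sub_le_of_measure_compl_le {s : Set Ω} {δ : ℝ} (hδ : 0 ≤ δ)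
    (h : μ sᶜ ≤ ENNReal.ofReal δ) : ENNReal.ofReal (1 - δ) ≤ μ s := by
  have hcover : 1 ≤ μ s + ENNReal.ofReal δ :=
    calc 1 = μ (s ∪ sᶜ) := by rw [Set.union_compl_self, measure_univ]
      _ ≤ μ s + μ sᶜ := measure_union_le _ _
      _ ≤ μ s + ENNReal.ofReal δ := by gcongr
  rw [ENNReal.ofReal_sub _ hδ, ENNReal.ofReal_one]
  exact tsub_le_iff_right.2 hcover

lemma mgf_le_exp_of_abs_le {W : Ω → ℝ} (hW : AEMeasurable W μ) {b t : ℝ}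
    (hb : ∀ ω, |W ω| ≤ b) (ht : 0 ≤ t) (htb : 2 * t * b ≤ 1) :
    mgf W μ t ≤ Real.exp (t * μ[W] + t ^ 2 * Var[W; μ]) := by
  set m := μ[W]
  have hWi : Integrable W μ := .of_bound hW.aestronglyMeasurable b (ae_of_all _ fun ω => (hb ω :))
  have hm : |m| ≤ b := by
    simpa using norm_integral_le_of_norm_le_const (μ := μ) (f := W) (ae_of_all _ fun ω => (hb ω :))
  have hUi : Integrable (fun ω => W ω - m) μ := hWi.sub (integrable_const m)
  have hU2i : Integrable (fun ω => (W ω - m) ^ 2) μ :=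
    .of_bound (hUi.aestronglyMeasurable.pow 2) ((2 * b) ^ 2) (ae_of_all _ fun ω => by
      rw [Real.norm_eq_abs, abs_pow]
      exact pow_le_pow_left₀ (abs_nonneg _) ((abs_sub _ _).trans (by linarith [hb ω])) 2)
  have hexp (ω : Ω) :
      Real.exp (t * (W ω - m)) ≤ 1 + t * (W ω - m) + t ^ 2 * (W ω - m) ^ 2 := by
    have := Real.exp_le_one_add_add_sq (x := t * (W ω - m)) (by
      nlinarith [le_abs_self (W ω - m), abs_sub (W ω) m, hb ω])
    linarith [mul_pow t (W ω - m) 2]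
  have hcentered : mgf (fun ω => W ω - m) μ t ≤ 1 + t ^ 2 * Var[W; μ] :=
    calc mgf (fun ω => W ω - m) μ t
        ≤ ∫ ω, (1 + t * (W ω - m) + t ^ 2 * (W ω - m) ^ 2) ∂μ :=
          integral_mono_of_nonneg (ae_of_all _ fun ω => (Real.exp_pos _).le)
            (((integrable_const 1).add (hUi.const_mul t)).add (hU2i.const_mul _))
            (ae_of_all _ hexp)
      _ = 1 + t ^ 2 * Var[W; μ] := by
        rw [integral_add (f := fun ω => 1 + t * (W ω - m))
            ((integrable_const 1).add (hUi.const_mul t)) (hU2i.const_mul _),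
          integral_add (integrable_const 1) (hUi.const_mul t), integral_const_mul,
          integral_const_mul, integral_sub hWi (integrable_const m), variance_eq_integral hW]
        simp [m]
  calc mgf W μ t = mgf (fun ω => W ω - m) μ t * Real.exp (t * m) := by
        rw [← mgf_add_const]; simp
    _ ≤ Real.exp (t ^ 2 * Var[W; μ]) * Real.exp (t * m) := by
        gcongr
        linarith [Real.add_one_le_exp (t ^ 2 * Var[W; μ])]
    _ = Real.exp (t * m + t ^ 2 * Var[W; μ]) := by rw [← Real.exp_add, add_comm]

lemma measure_sum_nonneg_le {ι : Type*} [Fintype ι] {W : ι → Ω → ℝ}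
    (hW : ∀ i, Measurable (W i)) (hind : iIndepFun W μ) {b t ε s : ℝ}
    (hb : ∀ i ω, |W i ω| ≤ b) (ht : 0 ≤ t) (htb : 2 * t * b ≤ 1)
    (hmean : ∀ i, μ[W i] ≤ -ε) (hvar : ∀ i, Var[W i; μ] ≤ s) :
    μ {ω | 0 ≤ ∑ i, W i ω} ≤
      ENNReal.ofReal (Real.exp (Fintype.card ι * (t ^ 2 * s - t * ε))) := by
  have hexp_int (i : ι) : Integrable (fun ω => Real.exp (t * W i ω)) μ :=
    .of_bound ((hW i).const_mul t).exp.aestronglyMeasurable (Real.exp (t * b))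
      (ae_of_all _ fun ω => by
        rw [Real.norm_eq_abs, abs_of_pos (Real.exp_pos _)]
        exact Real.exp_le_exp.2 (mul_le_mul_of_nonneg_left ((le_abs_self _).trans (hb i ω)) ht))
  have hmgf (i : ι) : mgf (W i) μ t ≤ Real.exp (t ^ 2 * s - t * ε) :=
    (mgf_le_exp_of_abs_le (hW i).aemeasurable (hb i) ht htb).trans <| Real.exp_le_exp.2 <| by
      nlinarith [mul_le_mul_of_nonneg_left (hmean i) ht,
        mul_le_mul_of_nonneg_left (hvar i) (sq_nonneg t)]
  have hchernoff := measure_ge_le_exp_mul_mgf (μ := μ) (X := ∑ i, W i) 0 ht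
    (hind.integrable_exp_mul_sum hW fun i _ => hexp_int i)
  rw [hind.mgf_sum hW] at hchernoff
  rw [ENNReal.le_ofReal_iff_toReal_le (measure_ne_top _ _) (Real.exp_pos _).le]
  calc (μ {ω | 0 ≤ ∑ i, W i ω}).toReal ≤ ∏ i, mgf (W i) μ t := by
        simpa [Finset.sum_apply, measureReal_def] using hchernoff
    _ ≤ ∏ _i : ι, Real.exp (t ^ 2 * s - t * ε) :=
        Finset.prod_le_prod (fun _ _ => mgf_nonneg) fun i _ => hmgf i
    _ = Real.exp (Fintype.card ι * (t ^ 2 * s - t * ε)) := by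
        rw [Finset.prod_const, Finset.card_univ, Real.exp_nat_mul]

lemma integral_sub_sq_eq_variance_add {Z : Ω → ℝ} (hZ : MemLp Z 2 μ) (θ : ℝ) :
    ∫ ω, (Z ω - θ) ^ 2 ∂μ = Var[Z; μ] + (μ[Z] - θ) ^ 2 := by
  have h := variance_eq_sub (X := fun ω => Z ω - θ) (hZ.sub (memLp_const θ))
  rw [variance_sub_const hZ.1] at h
  rw [h, integral_sub (hZ.integrable one_le_two) (integrable_const θ)]
  simp

section HuberScore

variable {α : ℝ} {Z : Ω → ℝ}

lemma abs_integral_huberClip_sub_le (hα : 0 < α) (hZ : MemLp Z 2 μ) (θ : ℝ) :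
    |∫ ω, huberClip α (Z ω - θ) ∂μ - (μ[Z] - θ)| ≤ (Var[Z; μ] + (μ[Z] - θ) ^ 2) / α := by
  have hψ : Integrable (fun ω => huberClip α (Z ω - θ)) μ :=
    .of_bound (measurable_huberClip.comp_aemeasurable
        (hZ.1.aemeasurable.sub_const θ)).aestronglyMeasurable
      α (ae_of_all _ fun ω => (abs_huberClip_le hα.le _ :))
  have hZθ : Integrable (fun ω => Z ω - θ) μ := (hZ.integrable one_le_two).sub (integrable_const θ)
  calc |∫ ω, huberClip α (Z ω - θ) ∂μ - (μ[Z] - θ)|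
      = |∫ ω, (huberClip α (Z ω - θ) - (Z ω - θ)) ∂μ| := by
        rw [integral_sub hψ hZθ, integral_sub (hZ.integrable one_le_two) (integrable_const θ)]
        simp
    _ ≤ ∫ ω, |huberClip α (Z ω - θ) - (Z ω - θ)| ∂μ := abs_integral_le_integral_abs
    _ ≤ ∫ ω, (Z ω - θ) ^ 2 / α ∂μ :=
        integral_mono_of_nonneg (ae_of_all _ fun _ => abs_nonneg _)
          ((hZ.sub (memLp_const θ)).integrable_sq.div_const α)
          (ae_of_all _ fun ω => abs_huberClip_sub_le hα _)
    _ = (Var[Z; μ] + (μ[Z] - θ) ^ 2) / α := by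
        rw [integral_div, integral_sub_sq_eq_variance_add hZ]

lemma variance_huberClip_le (hα : 0 ≤ α) (hZ : MemLp Z 2 μ) (θ : ℝ) :
    Var[fun ω => huberClip α (Z ω - θ); μ] ≤ Var[Z; μ] + (μ[Z] - θ) ^ 2 := by
  rw [← integral_sub_sq_eq_variance_add hZ θ]
  exact (variance_le_expectation_sq (measurable_huberClip.comp_aemeasurable
      (hZ.1.aemeasurable.sub_const θ)).aestronglyMeasurable).trans
    (integral_mono_of_nonneg (ae_of_all _ fun _ => sq_nonneg _)
      (hZ.sub (memLp_const θ)).integrable_sq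
      (ae_of_all _ fun ω => sq_le_sq.2 (abs_huberClip_le_abs hα _)))

end HuberScore

section HuberDeviation

variable {ι : Type*} [Fintype ι] {Z : ι → Ω → ℝ} {Z₀ : Ω → ℝ} {v α : ℝ} {θhat : Ω → ℝ}

theorem measure_lt_huberEstimate_le (hZ : ∀ i, Measurable (Z i)) (hind : iIndepFun Z μ)
    (hident : ∀ i, IdentDistrib (Z i) Z₀ μ μ) (hZ₀ : MemLp Z₀ 2 μ) (hv : 0 ≤ v)
    (hvar : Var[Z₀; μ] ≤ v ^ 2) (hα : 0 < α) (hvα : 7 * v ≤ α)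
    (hθhat : ∀ ω, IsHuberEstimate α (fun i => Z i ω) (θhat ω)) :
    μ {ω | μ[Z₀] + 7 * v * (v / α) < θhat ω} ≤
      ENNReal.ofReal (Real.exp (-2 * Fintype.card ι * (v / α) ^ 2)) := by
  set θ := μ[Z₀] + 7 * v * (v / α) with hθ
  have hψ (i : ι) : IdentDistrib (fun ω => huberClip α (Z i ω - θ))
      (fun ω => huberClip α (Z₀ ω - θ)) μ μ :=
    (hident i).comp (measurable_huberClip.comp (measurable_id.sub_const θ))
  have hsecond : Var[Z₀; μ] + (μ[Z₀] - θ) ^ 2 ≤ 2 * v ^ 2 := by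
    have h7 : 7 * v * (v / α) ≤ v := by
      rw [mul_div_assoc', div_le_iff₀ hα]; nlinarith
    have : (μ[Z₀] - θ) ^ 2 ≤ v ^ 2 := by
      rw [hθ, sub_add_cancel_left, neg_sq]
      exact pow_le_pow_left₀ (by positivity) h7 2
    linarith
  have hmean (i : ι) : μ[fun ω => huberClip α (Z i ω - θ)] ≤ -(5 * v * (v / α)) := by
    rw [(hψ i).integral_eq]
    have hbias := (abs_le.1 (abs_integral_huberClip_sub_le hα hZ₀ θ)).2
    have : (Var[Z₀; μ] + (μ[Z₀] - θ) ^ 2) / α ≤ 2 * v * (v / α) :=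
      (div_le_div_of_nonneg_right hsecond hα.le).trans_eq (by ring)
    linarith
  have hvar' (i : ι) : Var[fun ω => huberClip α (Z i ω - θ); μ] ≤ 2 * v ^ 2 := by
    rw [(hψ i).variance_eq]
    exact (variance_huberClip_le hα.le hZ₀ θ).trans hsecond
  calc μ {ω | θ < θhat ω} ≤ μ {ω | 0 ≤ ∑ i, huberClip α (Z i ω - θ)} :=
        measure_mono fun ω hω => (hθhat ω).sum_huberClip_nonneg_of_lt hα.le hω
    _ ≤ ENNReal.ofReal (Real.exp (Fintype.card ι *
          ((1 / (2 * α)) ^ 2 * (2 * v ^ 2) - 1 / (2 * α) * (5 * v * (v / α))))) :=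
        measure_sum_nonneg_le (fun i => measurable_huberClip.comp ((hZ i).sub_const θ))
          (hind.comp _ fun _ => measurable_huberClip.comp (measurable_id.sub_const θ))
          (fun i ω => abs_huberClip_le hα.le _) (by positivity) (by field_simp; rfl) hmean hvar'
    _ = ENNReal.ofReal (Real.exp (-2 * Fintype.card ι * (v / α) ^ 2)) := by
        congr 2; field_simp; ring

theorem measure_abs_huberEstimate_sub_gt_le (hZ : ∀ i, Measurable (Z i))
    (hind : iIndepFun Z μ) (hident : ∀ i, IdentDistrib (Z i) Z₀ μ μ) (hZ₀ : MemLp Z₀ 2 μ)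
    (hv : 0 ≤ v) (hvar : Var[Z₀; μ] ≤ v ^ 2) (hα : 0 < α) (hvα : 7 * v ≤ α)
    (hθhat : ∀ ω, IsHuberEstimate α (fun i => Z i ω) (θhat ω)) :
    μ {ω | 7 * v * (v / α) < |θhat ω - μ[Z₀]|} ≤
      ENNReal.ofReal (2 * Real.exp (-2 * Fintype.card ι * (v / α) ^ 2)) := by
  have hupper := measure_lt_huberEstimate_le hZ hind hident hZ₀ hv hvar hα hvα hθhat
  have hlower := measure_lt_huberEstimate_le (Z := fun i => -Z i) (Z₀ := -Z₀) (θhat := -θhat)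
    (fun i => (hZ i).neg) (hind.comp (fun _ => Neg.neg) fun _ => measurable_neg)
    (fun i => (hident i).neg) hZ₀.neg hv (by rwa [variance_neg]) hα hvα
    fun ω => (hθhat ω).neg
  calc μ {ω | 7 * v * (v / α) < |θhat ω - μ[Z₀]|}
      ≤ μ ({ω | μ[Z₀] + 7 * v * (v / α) < θhat ω} ∪
          {ω | μ[-Z₀] + 7 * v * (v / α) < (-θhat) ω}) := by
        refine measure_mono fun ω hω => ?_
        simp only [Set.mem_ofPred_eq, Set.mem_union, Pi.neg_apply, integral_neg] at hω ⊢
        rcases lt_abs.1 hω with h | h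
        · left; linarith
        · right; linarith
    _ ≤ ENNReal.ofReal (2 * Real.exp (-2 * Fintype.card ι * (v / α) ^ 2)) := by
        rw [two_mul, ENNReal.ofReal_add (by positivity) (by positivity)]
        exact (measure_union_le _ _).trans (add_le_add hupper hlower)

theorem measure_abs_huberEstimate_comp_sub_gt_le {E : Type*} [MeasurableSpace E] {X : Ω → E}
    {Y : ι → Ω → E} (hX : Measurable X) (hY : ∀ i, Measurable (Y i)) (hind : iIndepFun Y μ)
    (hmap : ∀ i, μ.map (Y i) = μ.map X) {g : E → ℝ} (hg : Measurable g)
    (hgX : MemLp (fun ω => g (X ω)) 2 μ) (hv : 0 ≤ v) (hvar : Var[fun ω => g (X ω); μ] ≤ v ^ 2)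
    (hα : 0 < α) (hvα : 7 * v ≤ α)
    (hθhat : ∀ ω, IsHuberEstimate α (fun i => g (Y i ω)) (θhat ω)) :
    μ {ω | 7 * v * (v / α) < |θhat ω - ∫ ω', g (X ω') ∂μ|} ≤
      ENNReal.ofReal (2 * Real.exp (-2 * Fintype.card ι * (v / α) ^ 2)) :=
  measure_abs_huberEstimate_sub_gt_le (Z := fun i ω => g (Y i ω)) (fun i => hg.comp (hY i))
    (hind.comp (fun _ => g) fun _ => hg)
    (fun i => (IdentDistrib.mk (hY i).aemeasurable hX.aemeasurable (hmap i)).comp hg)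
    hgX hv hvar hα hvα hθhat

end HuberDeviation

end Probability

lemma log_sq_div_le_two_mul_log_div {p δ : ℝ} (hp : 0 < p) (hδ0 : 0 < δ) (hδ1 : δ ≤ 1) :
    Real.log (p ^ 2 / δ) ≤ 2 * Real.log (p / δ) := by
  rw [Real.log_div (by positivity) hδ0.ne', Real.log_div hp.ne' hδ0.ne', Real.log_pow]
  push_cast
  linarith [Real.log_nonpos hδ0.le hδ1]

/-- For this `α`, `v / α = √(log (p² / δ) / n)`. -/
lemma huber_scale_bounds {p n δ v α : ℝ} (hp : 2 ≤ p) (hδ0 : 0 < δ) (hδ1 : δ < 1) (hv : 0 < v)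
    (hn : 100 * Real.log (p / δ) ≤ n) (hα : α = √(n * v ^ 2 / Real.log (p ^ 2 / δ))) :
    7 * v ≤ α ∧ 7 * v * (v / α) ≤ 100 * v * √((Real.log p + Real.log (1 / δ)) / n) ∧
      2 * Real.exp (-2 * n * (v / α) ^ 2) ≤ δ / p ^ 2 := by
  set L := Real.log (p ^ 2 / δ)
  set Λ := Real.log (p / δ)
  have hΛ : 0 < Λ := Real.log_pos ((one_lt_div hδ0).2 (by linarith))
  have hL : 0 < L := Real.log_pos ((one_lt_div hδ0).2 (by nlinarith))
  have hLΛ : L ≤ 2 * Λ := log_sq_div_le_two_mul_log_div (by linarith) hδ0 hδ1.le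
  have hn0 : 0 < n := by linarith
  have hrate : v / α = √(L / n) := by
    rw [hα]
    nth_rewrite 1 [← Real.sqrt_sq hv.le]
    rw [← Real.sqrt_div' _ (by positivity)]
    congr 1
    field_simp
  refine ⟨?_, ?_, ?_⟩
  · exact hα ▸ (le_abs_self _).trans (Real.abs_le_sqrt (by
      rw [le_div_iff₀ hL]; nlinarith [mul_le_mul_of_nonneg_right hn (sq_nonneg v)]))
  · rw [one_div, Real.log_inv, ← sub_eq_add_neg, ← Real.log_div (by positivity) hδ0.ne', hrate,
      mul_assoc, mul_assoc, mul_left_comm 7, mul_left_comm 100]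
    refine mul_le_mul_of_nonneg_left ?_ hv.le
    calc 7 * √(L / n) ≤ 7 * √(4 * (Λ / n)) := by
          rw [← mul_div_assoc]
          gcongr
          linarith
      _ = 14 * √(Λ / n) := by
          rw [Real.sqrt_mul (by norm_num), show (4 : ℝ) = 2 ^ 2 by norm_num,
            Real.sqrt_sq (by norm_num)]
          ring
      _ ≤ 100 * √(Λ / n) := by gcongr; norm_num
  · rw [hrate, Real.sq_sqrt (by positivity), mul_assoc, mul_div_cancel₀ _ hn0.ne',
      show -2 * L = -L + -L by ring, Real.exp_add, Real.exp_neg, Real.exp_log (by positivity),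
      inv_div, div_mul_div_comm, ← mul_div_assoc, div_le_div_iff₀ (by positivity) (by positivity)]
    nlinarith [mul_nonneg (mul_nonneg hδ0.le (sq_nonneg p)) (by nlinarith : (0 : ℝ) ≤ p ^ 2 - 2 * δ)]

/-- concentration of entrywise Huber M-estimators of a covariance matrix
under only bounded fourth moments. -/
theorem huber_covariance_concentration :
    ∃ C : ℝ, 0 < C ∧
      ∀ (Ω : Type) (_ : MeasureSpace Ω) (_ : IsProbabilityMeasure (volume : Measure Ω))
        (p n : ℕ), 2 ≤ p →
        ∀ (X : Ω → Fin p → ℝ), Measurable X →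
        (∀ i, ∫ ω, X ω i = 0) →
        (∀ i, Integrable (fun ω => (X ω i) ^ 4)) →
        ∀ (σ : Fin p → Fin p → ℝ), (∀ i j, σ i j = ∫ ω, X ω i * X ω j) →
        ∀ (v : ℝ), 0 < v →
        (∀ i j, variance (fun ω => X ω i * X ω j) volume ≤ v ^ 2) →
        ∀ (Y : Fin n → Ω → Fin p → ℝ), (∀ t, Measurable (Y t)) →
        iIndepFun (m := fun _ => MeasurableSpace.pi) Y volume →
        (∀ t, Measure.map (Y t) volume = Measure.map X volume) →
        ∀ (δ : ℝ), δ ∈ Set.Ioo (0 : ℝ) 1 →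
        ∀ (α : ℝ), α = Real.sqrt ((n : ℝ) * v ^ 2 / Real.log ((p : ℝ) ^ 2 / δ)) →
        ∀ (σhat : Fin p → Fin p → Ω → ℝ),
        (∀ i j ω, ∀ x : ℝ,
          (∑ t : Fin n, huberLoss α (Y t ω i * Y t ω j - σhat i j ω)) ≤
            ∑ t : Fin n, huberLoss α (Y t ω i * Y t ω j - x)) →
        C * Real.log ((p : ℝ) / δ) ≤ (n : ℝ) →
        ENNReal.ofReal (1 - δ) ≤
          volume {ω | ∀ i j : Fin p,
            |σhat i j ω - σ i j| ≤
              C * v * Real.sqrt ((Real.log p + Real.log (1 / δ)) / n)} := by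
  refine ⟨100, by norm_num, ?_⟩
  intro Ω _ _ p n hp X hX _ h4 σ hσ v hv hvar Y hY hind hmap δ ⟨hδ0, hδ1⟩ α hα σhat hmin hn
  obtain ⟨hvα, hdev, hprob⟩ := huber_scale_bounds (by exact_mod_cast hp) hδ0 hδ1 hv hn hα
  have hpair (i j : Fin p) :
      volume {ω | 7 * v * (v / α) < |σhat i j ω - σ i j|} ≤ ENNReal.ofReal (δ / p ^ 2) := by
    rw [hσ i j]
    refine (measure_abs_huberEstimate_comp_sub_gt_le hX hY hind hmap
      (g := fun y : Fin p → ℝ => y i * y j) (by fun_prop)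
      (memLp_two_mul_of_integrable_pow_four (by fun_prop) (by fun_prop) (h4 i) (h4 j))
      hv.le (hvar i j) (by linarith) hvα (hmin i j)).trans ?_
    simpa using ENNReal.ofReal_le_ofReal hprob
  refine ofReal_one_sub_le_of_measure_compl_le hδ0.le ?_
  calc volume {ω | ∀ i j : Fin p, |σhat i j ω - σ i j| ≤
        100 * v * √((Real.log p + Real.log (1 / δ)) / n)}ᶜ
      ≤ volume (⋃ i, ⋃ j, {ω | 7 * v * (v / α) < |σhat i j ω - σ i j|}) := by
        refine measure_mono fun ω hω => ?_
        simp only [Set.mem_compl_iff, Set.mem_ofPred_eq, not_forall, not_le] at hω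
        obtain ⟨i, j, h⟩ := hω
        exact Set.mem_iUnion₂.2 ⟨i, j, hdev.trans_lt h⟩
    _ ≤ ENNReal.ofReal (Fintype.card (Fin p) ^ 2 * (δ / p ^ 2)) :=
        measure_iUnion₂_le_ofReal_card_sq_mul hpair
    _ = ENNReal.ofReal δ := by rw [Fintype.card_fin]; field_simp
end

section
/- Let X be a real random variable with mean μ and finite variance σ², and let α_n → ∞ be a sequence of positive reals. Let (t_n) be a real sequence such that, for all sufficiently large n, t_n is the unique zero of λ_n(t) = E ψ_{α_n}(X − t). Then (t_n − μ)/E[ψ_{α_n}(X − μ)] → 1 as n → ∞, in the following precise sense: for every ε > 0 there exists N such that for all n ≥ N, |t_n − μ − E[ψ_{α_n}(X − μ)]| ≤ ε·|E[ψ_{α_n}(X − μ)]|. -/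
/-! Write `λ(s) = E ψ_a(X - s)`. Since `ψ_a` is nondecreasing and 1-Lipschitz, `λ` is antitone
and `λ(s) + s` is monotone. Where `ψ_a` is the identity, `λ` has slope exactly `-1`; by Markov's
inequality this persists up to a defect `E|X - μ| / r` on the window of points within `a - r`
of `μ`. Taking `r` large and then `a = α_n` larger still, the slope is within `ε / (1 + ε)`
of `-1` on a window of radius `(1 + ε) E|X - μ| ≥ (1 + ε) |λ(μ)|`, which traps the zero `t`
of `λ` between `μ + λ(μ)` and `μ + (1 + ε) λ(μ)`. -/

open MeasureTheory Filter

/-- The Huber score function: `ψ_α(x) = x` if `|x| ≤ α`, and `α · sign(x)` otherwise. -/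
noncomputable def huberScore (α x : ℝ) : ℝ := if |x| ≤ α then x else α * Real.sign x

section HuberScore

variable {a x : ℝ}

lemma huberScore_of_abs_le (h : |x| ≤ a) : huberScore a x = x := if_pos h

lemma huberScore_eq_max_min (ha : 0 ≤ a) : huberScore a x = max (-a) (min x a) := by
  unfold huberScore
  split_ifs with h
  · rw [abs_le] at h
    rw [min_eq_left h.2, max_eq_right h.1]
  · rcases lt_abs.1 (not_le.1 h) with h | h
    · rw [Real.sign_of_pos (by linarith), min_eq_right h.le, max_eq_right (by linarith), mul_one]
    · rw [Real.sign_of_neg (by linarith), min_eq_left (by linarith), max_eq_left (by linarith),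
        mul_neg_one]

lemma monotone_huberScore (ha : 0 ≤ a) : Monotone (huberScore a) := fun x y hxy => by
  simp only [huberScore_eq_max_min ha]
  gcongr

lemma lipschitzWith_huberScore (ha : 0 ≤ a) : LipschitzWith 1 (huberScore a) := by
  convert (LipschitzWith.id.min_const a).const_max (-a) using 1
  exact funext fun x => huberScore_eq_max_min ha

lemma huberScore_sub_huberScore_le (ha : 0 ≤ a) {x y : ℝ} (hxy : x ≤ y) :
    huberScore a y - huberScore a x ≤ y - x := by
  have := (lipschitzWith_huberScore ha).dist_le_mul y x
  rw [NNReal.coe_one, one_mul, Real.dist_eq, Real.dist_eq, abs_of_nonneg (sub_nonneg.2 hxy)] at this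
  exact (le_abs_self _).trans this

lemma abs_huberScore_le (ha : 0 ≤ a) : |huberScore a x| ≤ a := by
  rw [huberScore_eq_max_min ha, abs_le]
  exact ⟨le_max_left _ _, max_le (by linarith) (min_le_right _ _)⟩

lemma abs_huberScore_le_abs (ha : 0 ≤ a) : |huberScore a x| ≤ |x| := by
  have h0 : huberScore a 0 = 0 := huberScore_of_abs_le (by simpa)
  simpa [h0, Real.dist_eq] using (lipschitzWith_huberScore ha).dist_le_mul x 0

/-- Inside `|x - m| ≤ r` both arguments stay in the linear part of `ψ_a`, where the difference is
exactly `u - s`; outside, the left side is negative. -/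
lemma sub_mul_one_sub_le_huberScore_sub {m r R s u : ℝ} (hr : 0 < r) (hRa : R + r ≤ a)
    (hs : s ∈ Set.Icc (m - R) (m + R)) (hu : u ∈ Set.Icc (m - R) (m + R)) (hsu : s ≤ u) :
    (u - s) * (1 - |x - m| / r) ≤ huberScore a (x - s) - huberScore a (x - u) := by
  obtain ⟨hs₁, hs₂⟩ := hs
  obtain ⟨hu₁, hu₂⟩ := hu
  rcases le_or_gt |x - m| r with hx | hx
  · have hx' := abs_le.1 hx
    rw [huberScore_of_abs_le (abs_le.2 ⟨by linarith, by linarith⟩),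
      huberScore_of_abs_le (abs_le.2 ⟨by linarith, by linarith⟩)]
    have : 0 ≤ (u - s) * (|x - m| / r) := by positivity
    nlinarith
  · have hneg : 1 - |x - m| / r < 0 := by rw [sub_neg, one_lt_div hr]; exact hx
    have hmono := monotone_huberScore (a := a) (by linarith) (show x - u ≤ x - s by linarith)
    nlinarith

end HuberScore

section Integral

variable {Ω : Type*} [MeasurableSpace Ω] {P : Measure Ω} {X : Ω → ℝ} {a : ℝ}

lemma integrable_huberScore_comp [IsFiniteMeasure P] (hX : AEStronglyMeasurable X P)
    (ha : 0 ≤ a) (s : ℝ) : Integrable (fun ω => huberScore a (X ω - s)) P :=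
  .of_bound (((lipschitzWith_huberScore ha).continuous.comp
      (continuous_sub_right s)).comp_aestronglyMeasurable hX) a
    (ae_of_all _ fun _ => abs_huberScore_le ha)

lemma antitone_integral_huberScore [IsFiniteMeasure P] (hX : AEStronglyMeasurable X P)
    (ha : 0 ≤ a) : Antitone fun s => ∫ ω, huberScore a (X ω - s) ∂P := fun s u hsu =>
  integral_mono (integrable_huberScore_comp hX ha u) (integrable_huberScore_comp hX ha s)
    fun _ => monotone_huberScore ha (by linarith)

lemma monotone_integral_huberScore_add_id [IsProbabilityMeasure P]
    (hX : AEStronglyMeasurable X P) (ha : 0 ≤ a) :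
    Monotone fun s => ∫ ω, huberScore a (X ω - s) ∂P + s := by
  intro s u hsu
  have hI := integrable_huberScore_comp hX ha
  have : ∫ ω, huberScore a (X ω - s) ∂P - ∫ ω, huberScore a (X ω - u) ∂P ≤ u - s :=
    calc _ = ∫ ω, (huberScore a (X ω - s) - huberScore a (X ω - u)) ∂P :=
          (integral_sub (hI s) (hI u)).symm
      _ ≤ ∫ _, (u - s) ∂P :=
          integral_mono ((hI s).sub (hI u)) (integrable_const _) fun ω => by
            simpa only [sub_sub_sub_cancel_left] using
              huberScore_sub_huberScore_le ha (show X ω - u ≤ X ω - s by linarith)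
      _ = u - s := by simp
  dsimp only
  linarith

lemma abs_integral_huberScore_le [IsFiniteMeasure P] (hX : Integrable X P) (ha : 0 ≤ a)
    (m : ℝ) : |∫ ω, huberScore a (X ω - m) ∂P| ≤ ∫ ω, |X ω - m| ∂P :=
  abs_integral_le_integral_abs.trans <| integral_mono
    (integrable_huberScore_comp hX.aestronglyMeasurable ha m).abs
    (hX.sub (integrable_const m)).abs fun _ => abs_huberScore_le_abs ha

/-- Markov's inequality in disguise: for `s ≤ u` within `a - r` of `m`,
`λ(s) - λ(u) ≥ (u - s) P(|X - m| ≤ r) ≥ (u - s)(1 - E|X - m| / r)`. -/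
lemma antitoneOn_integral_huberScore_add [IsProbabilityMeasure P] (hX : Integrable X P)
    {m r R : ℝ} (hr : 0 < r) (hRa : R + r ≤ a) :
    AntitoneOn (fun s => ∫ ω, huberScore a (X ω - s) ∂P + (1 - (∫ ω, |X ω - m| ∂P) / r) * s)
      (Set.Icc (m - R) (m + R)) := by
  intro s hs u hu hsu
  have ha : 0 ≤ a := by linarith [hs.1, hs.2]
  have hXm : Integrable (fun ω => |X ω - m|) P := (hX.sub (integrable_const m)).abs
  have hI := integrable_huberScore_comp hX.aestronglyMeasurable ha
  have key : (u - s) * (1 - (∫ ω, |X ω - m| ∂P) / r) ≤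
      ∫ ω, huberScore a (X ω - s) ∂P - ∫ ω, huberScore a (X ω - u) ∂P :=
    calc _ = ∫ ω, (u - s) * (1 - |X ω - m| / r) ∂P := by
          rw [integral_const_mul, integral_sub (integrable_const 1) (hXm.div_const r),
            integral_div]
          simp
      _ ≤ ∫ ω, (huberScore a (X ω - s) - huberScore a (X ω - u)) ∂P :=
          integral_mono (((integrable_const 1).sub (hXm.div_const r)).const_mul _)
            ((hI s).sub (hI u)) fun _ => sub_mul_one_sub_le_huberScore_sub hr hRa hs hu hsu
      _ = _ := integral_sub (hI s) (hI u)
  dsimp only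
  linarith

end Integral

section ZeroOfNearlyUnitSlope

variable {f : ℝ → ℝ} {m d R ε t : ℝ}

lemma mem_Icc_of_apply_eq_zero_of_pos (hf : Antitone f) (hlip : Monotone fun s => f s + s)
    (hslope : AntitoneOn (fun s => f s + (1 - d) * s) (Set.Icc (m - R) (m + R)))
    (hε : 0 < ε) (hd : (1 + ε) * d < ε) (hR : (1 + ε) * f m ≤ R) (hpos : 0 < f m)
    (ht : f t = 0) : t ∈ Set.Icc (m + f m) (m + (1 + ε) * f m) := by
  have hstep : 0 < (1 + ε) * f m := by positivity
  constructor
  · rcases le_total m t with hmt | htm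
    · linarith [hlip hmt]
    · linarith [hf htm]
  · by_contra! hut
    have hu := hslope ⟨by linarith, by linarith⟩ ⟨by linarith, by linarith⟩
      (show m ≤ m + (1 + ε) * f m by linarith)
    have := hf hut.le
    dsimp only at hu
    nlinarith [mul_pos hpos (show 0 < ε - (1 + ε) * d by linarith)]

/-- The case `f m < 0` is the case `f m > 0` for the reflection `s ↦ -f (2m - s)`. -/
lemma abs_sub_sub_le_of_apply_eq_zero (hf : Antitone f) (hlip : Monotone fun s => f s + s)
    (hslope : AntitoneOn (fun s => f s + (1 - d) * s) (Set.Icc (m - R) (m + R)))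
    (hε : 0 < ε) (hd : (1 + ε) * d < ε) (hR : (1 + ε) * |f m| ≤ R)
    (ht : f t = 0) (huniq : ∀ s, f s = 0 → s = t) : |t - m - f m| ≤ ε * |f m| := by
  rcases lt_trichotomy (f m) 0 with hneg | hzero | hpos
  · set g : ℝ → ℝ := fun s => -f (2 * m - s)
    have hg : Antitone g := fun s u hsu => neg_le_neg (hf (by linarith))
    have hglip : Monotone fun s => g s + s := fun s u hsu => by
      linarith [hlip (show 2 * m - u ≤ 2 * m - s by linarith)]
    have hgslope : AntitoneOn (fun s => g s + (1 - d) * s) (Set.Icc (m - R) (m + R)) :=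
      fun s hs u hu hsu => by
        have := hslope ⟨by linarith [hu.2], by linarith [hu.1]⟩
          ⟨by linarith [hs.2], by linarith [hs.1]⟩ (show 2 * m - u ≤ 2 * m - s by linarith)
        simp only [g] at this ⊢
        linarith
    have hgm : g m = -f m := by simp only [g, two_mul, add_sub_cancel_right]
    obtain ⟨h₁, h₂⟩ := mem_Icc_of_apply_eq_zero_of_pos (t := 2 * m - t) hg hglip hgslope hε
      hd (by rwa [hgm, ← abs_of_neg hneg]) (by rw [hgm]; linarith) (by simp [g, ht])
    rw [hgm] at h₁ h₂
    rw [abs_of_neg hneg, abs_le]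
    constructor <;> linarith
  · rw [huniq m hzero]
    simp [ht]
  · obtain ⟨h₁, h₂⟩ := mem_Icc_of_apply_eq_zero_of_pos hf hlip hslope hε hd
      (by rwa [abs_of_pos hpos] at hR) hpos ht
    rw [abs_of_pos hpos, abs_le]
    constructor <;> linarith

end ZeroOfNearlyUnitSlope

theorem huber_zero_bias_ratio_general {Ω : Type*} [MeasureSpace Ω]
    [IsProbabilityMeasure (volume : Measure Ω)]
    (X : Ω → ℝ) (hXint : Integrable X)
    (μ : ℝ)
    (α : ℕ → ℝ) (hα : Tendsto α atTop atTop)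
    (t : ℕ → ℝ)
    (ht : ∀ᶠ n in atTop,
      (∫ ω, huberScore (α n) (X ω - t n)) = 0 ∧
        ∀ s : ℝ, (∫ ω, huberScore (α n) (X ω - s)) = 0 → s = t n) :
    ∀ ε : ℝ, 0 < ε → ∃ N : ℕ, ∀ n ≥ N,
      |t n - μ - ∫ ω, huberScore (α n) (X ω - μ)| ≤
        ε * |∫ ω, huberScore (α n) (X ω - μ)| := by
  intro ε hε
  set c := ∫ ω, |X ω - μ|
  have hc : 0 ≤ c := integral_nonneg fun _ => abs_nonneg _
  set r := (1 + ε) * c / ε + 1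
  have hr : 0 < r := by positivity
  have hcr : (1 + ε) * (c / r) < ε := by
    rw [← mul_div_assoc, div_lt_iff₀ hr]
    have : ε * r = (1 + ε) * c + ε := by
      simp only [r]
      field_simp
    linarith
  obtain ⟨N, hN⟩ := eventually_atTop.1 (ht.and (hα.eventually_ge_atTop ((1 + ε) * c + r)))
  refine ⟨N, fun n hn => ?_⟩
  obtain ⟨⟨hzero, huniq⟩, hαn⟩ := hN n hn
  have ha : 0 ≤ α n := by nlinarith
  exact abs_sub_sub_le_of_apply_eq_zero (antitone_integral_huberScore hXint.1 ha)
    (monotone_integral_huberScore_add_id hXint.1 ha)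
    (antitoneOn_integral_huberScore_add hXint hr (R := (1 + ε) * c) hαn) hε hcr
    (by gcongr; exact abs_integral_huberScore_le hXint ha μ) hzero huniq

/-- if `t_n` is (eventually) the unique zero of `λ_n(t) = E ψ_{α_n}(X − t)`
with `α_n → ∞`, then `(t_n − μ)/E ψ_{α_n}(X − μ) → 1`, in the sense that for every `ε > 0`
eventually `|t_n − μ − E ψ_{α_n}(X − μ)| ≤ ε |E ψ_{α_n}(X − μ)|`. -/
theorem huber_zero_bias_ratio {Ω : Type*} [MeasureSpace Ω]
    [IsProbabilityMeasure (volume : Measure Ω)]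
    (X : Ω → ℝ) (hXmeas : Measurable X) (hXint : Integrable X)
    (μ : ℝ) (hμ : ∫ ω, X ω = μ) (hXL2 : MemLp X 2)
    (α : ℕ → ℝ) (hαpos : ∀ n, 0 < α n) (hα : Tendsto α atTop atTop)
    (t : ℕ → ℝ)
    (ht : ∀ᶠ n in atTop,
      (∫ ω, huberScore (α n) (X ω - t n)) = 0 ∧
        ∀ s : ℝ, (∫ ω, huberScore (α n) (X ω - s)) = 0 → s = t n) :
    ∀ ε : ℝ, 0 < ε → ∃ N : ℕ, ∀ n ≥ N,
      |t n - μ - ∫ ω, huberScore (α n) (X ω - μ)| ≤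
        ε * |∫ ω, huberScore (α n) (X ω - μ)| :=
  huber_zero_bias_ratio_general X hXint μ α hα t ht
end

section
/- Let X be a real random variable with mean μ and finite variance, and let α_n → ∞ be a sequence of positive reals. Then there exists N such that for every n ≥ N the function t ↦ λ_n(t) = E ψ_{α_n}(X − t) has exactly one zero t_n in ℝ; moreover t_n → μ as n → ∞. -/
open MeasureTheory Filter

/-!
Writing `ψ_α` as the clamp of `x` to `[-α, α]`, `λ(t) = E ψ_α(X - t)` is antitone and
1-Lipschitz in `t`, and `|ψ_α(x) - x| ≤ x² / α` gives
`|λ(t) - (μ - t)| ≤ E (X - t)² / α = (Var X + (t - μ)²) / α`.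
So once `Var X + ε² < α ε`, `λ` is positive at `μ - ε` and negative at `μ + ε`: a zero exists and
every zero lies within `ε` of `μ`. Two distinct zeros `s ≠ t` would force `ψ_α(X - s) = ψ_α(X - t)`
almost surely, which needs `|X - t| ≥ α`; then `α² ≤ E (X - t)² < Var X + 1`, impossible for
`α > Var X + 1`.
-/

open ProbabilityTheory Set

section HuberScore

variable {α : ℝ}

theorem huberScore_eq_projIcc (hα : 0 ≤ α) (x : ℝ) :
    huberScore α x = projIcc (-α) α (by linarith) x := by
  rw [coe_projIcc, huberScore]
  split_ifs with hx
  · rw [abs_le] at hx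
    rw [min_eq_right hx.2, max_eq_right hx.1]
  · rcases lt_trichotomy x 0 with hneg | rfl | hpos
    · rw [Real.sign_of_neg hneg, min_eq_right (by linarith), max_eq_left (by grind)]
      ring
    · simp [hα] at hx
    · rw [Real.sign_of_pos hpos, min_eq_left (by grind), max_eq_right (by linarith)]
      ring

theorem monotone_huberScore_s4 (hα : 0 ≤ α) : Monotone (huberScore α) := by
  intro x y hxy
  simp only [huberScore_eq_projIcc hα]
  exact Subtype.mono_coe _ (monotone_projIcc _ hxy)

theorem lipschitzWith_huberScore_s4 (hα : 0 ≤ α) : LipschitzWith 1 (huberScore α) := by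
  rw [funext (huberScore_eq_projIcc hα)]
  exact ((LipschitzWith.subtype_val _).comp (LipschitzWith.projIcc _)).weaken (one_mul 1).le

theorem abs_huberScore_le_s4 (hα : 0 ≤ α) (x : ℝ) : |huberScore α x| ≤ α := by
  rw [huberScore_eq_projIcc hα, abs_le]
  exact (projIcc (-α) α _ x).2

theorem abs_huberScore_sub_self_le (hα : 0 < α) (x : ℝ) : |huberScore α x - x| ≤ x ^ 2 / α := by
  rw [le_div_iff₀ hα, huberScore]
  split_ifs with hx
  · simp only [sub_self, abs_zero, zero_mul]; positivity
  · rcases lt_trichotomy x 0 with hneg | rfl | hpos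
    · rw [Real.sign_of_neg hneg, abs_of_neg hneg] at *
      rw [abs_of_nonneg (by linarith)]; nlinarith
    · simp [hα.le] at hx
    · rw [Real.sign_of_pos hpos, abs_of_pos hpos] at *
      rw [abs_of_nonpos (by linarith)]; nlinarith

theorem le_abs_of_huberScore_eq {x y : ℝ} (hxy : x ≠ y) (h : huberScore α x = huberScore α y) :
    α ≤ |x| := by
  by_contra! hx
  have hα : 0 ≤ α := (abs_nonneg x).trans hx.le
  rw [huberScore_eq_projIcc hα, huberScore_eq_projIcc hα, coe_projIcc, coe_projIcc] at h
  rw [abs_lt] at hx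
  grind

end HuberScore

section HuberMean

variable {Ω : Type*} [MeasurableSpace Ω] {P : Measure Ω} {X : Ω → ℝ} {α : ℝ}

noncomputable def huberMean (P : Measure Ω) (X : Ω → ℝ) (α t : ℝ) : ℝ :=
  ∫ ω, huberScore α (X ω - t) ∂P

theorem integrable_huberScore_sub [IsFiniteMeasure P] (hX : AEStronglyMeasurable X P)
    (hα : 0 ≤ α) (t : ℝ) : Integrable (fun ω ↦ huberScore α (X ω - t)) P :=
  .of_bound ((lipschitzWith_huberScore_s4 hα).continuous.comp_aestronglyMeasurable
    (hX.sub aestronglyMeasurable_const)) α (ae_of_all _ fun _ ↦ abs_huberScore_le_s4 hα _)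

theorem antitone_huberMean [IsFiniteMeasure P] (hX : AEStronglyMeasurable X P) (hα : 0 ≤ α) :
    Antitone (huberMean P X α) := fun s t hst ↦
  integral_mono (integrable_huberScore_sub hX hα t) (integrable_huberScore_sub hX hα s)
    fun ω ↦ monotone_huberScore_s4 hα (by linarith)

theorem lipschitzWith_huberMean [IsProbabilityMeasure P] (hX : AEStronglyMeasurable X P)
    (hα : 0 ≤ α) : LipschitzWith 1 (huberMean P X α) := by
  refine .of_dist_le_mul fun s t ↦ ?_
  rw [NNReal.coe_one, one_mul, dist_eq_norm, huberMean, huberMean,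
    ← integral_sub (integrable_huberScore_sub hX hα s) (integrable_huberScore_sub hX hα t)]
  calc ‖∫ ω, (huberScore α (X ω - s) - huberScore α (X ω - t)) ∂P‖
      ≤ dist s t * P.real univ := norm_integral_le_of_norm_le_const <| ae_of_all _ fun ω ↦ by
        rw [← dist_eq_norm, ← dist_sub_left (X ω) s t]
        simpa using (lipschitzWith_huberScore_s4 hα).dist_le_mul (X ω - s) (X ω - t)
    _ = dist s t := by simp

theorem integral_sub_const_sq [IsProbabilityMeasure P] (hX : MemLp X 2 P) (t : ℝ) :
    ∫ ω, (X ω - t) ^ 2 ∂P = Var[X; P] + (P[X] - t) ^ 2 := by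
  have hXt : MemLp (fun ω ↦ X ω - t) 2 P := hX.sub (memLp_const t)
  rw [← variance_sub_const hX.aestronglyMeasurable t, variance_eq_sub hXt,
    integral_sub (hX.integrable one_le_two) (integrable_const t)]
  simp

theorem abs_huberMean_sub_le [IsProbabilityMeasure P] (hX : MemLp X 2 P) (hα : 0 < α) (t : ℝ) :
    |huberMean P X α t - (P[X] - t)| ≤ (Var[X; P] + (P[X] - t) ^ 2) / α := by
  have hXt : Integrable (fun ω ↦ X ω - t) P := (hX.integrable one_le_two).sub (integrable_const t)
  have hψ := integrable_huberScore_sub hX.aestronglyMeasurable hα.le t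
  calc |huberMean P X α t - (P[X] - t)|
      = ‖∫ ω, (huberScore α (X ω - t) - (X ω - t)) ∂P‖ := by
        rw [integral_sub hψ hXt, integral_sub (hX.integrable one_le_two) (integrable_const t)]
        simp [huberMean]
    _ ≤ ∫ ω, (X ω - t) ^ 2 / α ∂P :=
        norm_integral_le_of_norm_le (((hX.sub (memLp_const t)).integrable_sq).div_const α)
          (ae_of_all _ fun ω ↦ abs_huberScore_sub_self_le hα _)
    _ = (Var[X; P] + (P[X] - t) ^ 2) / α := by
        rw [integral_div, integral_sub_const_sq hX]

theorem ae_huberScore_eq_of_huberMean_eq [IsFiniteMeasure P] (hX : AEStronglyMeasurable X P)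
    (hα : 0 ≤ α) {s t : ℝ} (h : huberMean P X α s = huberMean P X α t) :
    ∀ᵐ ω ∂P, huberScore α (X ω - s) = huberScore α (X ω - t) := by
  wlog hst : s ≤ t generalizing s t
  · exact (this h.symm (le_of_not_ge hst)).mono fun _ ↦ Eq.symm
  have hψ (u) := integrable_huberScore_sub hX hα u
  have hzero : ∫ ω, (huberScore α (X ω - s) - huberScore α (X ω - t)) ∂P = 0 := by
    rw [integral_sub (hψ s) (hψ t)]; exact sub_eq_zero.2 h
  filter_upwards [(integral_eq_zero_iff_of_nonneg (fun ω ↦ sub_nonneg.2 <|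
    monotone_huberScore_s4 hα (by linarith : X ω - t ≤ X ω - s)) ((hψ s).sub (hψ t))).1 hzero]
    with ω hω
  exact sub_eq_zero.1 hω

end HuberMean

section Zeros

variable {Ω : Type*} [MeasurableSpace Ω] {P : Measure Ω} [IsProbabilityMeasure P] {X : Ω → ℝ}
  {α ε : ℝ}

theorem huberMean_mean_sub_pos (hX : MemLp X 2 P) (hε : 0 < ε)
    (hα : Var[X; P] + ε ^ 2 < α * ε) : 0 < huberMean P X α (P[X] - ε) := by
  have hα₀ : 0 < α := by nlinarith [variance_nonneg X P]
  have h := abs_huberMean_sub_le hX hα₀ (P[X] - ε)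
  rw [sub_sub_cancel] at h
  have hsmall : (Var[X; P] + ε ^ 2) / α < ε := (div_lt_iff₀ hα₀).2 (by linarith)
  linarith [neg_abs_le (huberMean P X α (P[X] - ε) - ε)]

theorem huberMean_mean_add_neg (hX : MemLp X 2 P) (hε : 0 < ε)
    (hα : Var[X; P] + ε ^ 2 < α * ε) : huberMean P X α (P[X] + ε) < 0 := by
  have hα₀ : 0 < α := by nlinarith [variance_nonneg X P]
  have h := abs_huberMean_sub_le hX hα₀ (P[X] + ε)
  rw [sub_add_cancel_left, neg_sq] at h
  have hsmall : (Var[X; P] + ε ^ 2) / α < ε := (div_lt_iff₀ hα₀).2 (by linarith)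
  linarith [le_abs_self (huberMean P X α (P[X] + ε) - -ε)]

theorem abs_sub_mean_lt_of_huberMean_eq_zero (hX : MemLp X 2 P) (hε : 0 < ε)
    (hα : Var[X; P] + ε ^ 2 < α * ε) {t : ℝ} (ht : huberMean P X α t = 0) : |t - P[X]| < ε := by
  have hα₀ : 0 < α := by nlinarith [variance_nonneg X P]
  have hanti := antitone_huberMean hX.aestronglyMeasurable hα₀.le
  rw [abs_sub_lt_iff]
  constructor
  · by_contra! h
    have := hanti (show P[X] + ε ≤ t by linarith)
    linarith [huberMean_mean_add_neg hX hε hα]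
  · by_contra! h
    have := hanti (show t ≤ P[X] - ε by linarith)
    linarith [huberMean_mean_sub_pos hX hε hα]

theorem exists_huberMean_eq_zero (hX : MemLp X 2 P) (hε : 0 < ε)
    (hα : Var[X; P] + ε ^ 2 < α * ε) : ∃ t, huberMean P X α t = 0 := by
  have hα₀ : 0 < α := by nlinarith [variance_nonneg X P]
  exact intermediate_value_univ (P[X] + ε) (P[X] - ε)
    (lipschitzWith_huberMean hX.aestronglyMeasurable hα₀.le).continuous
    ⟨(huberMean_mean_add_neg hX hε hα).le, (huberMean_mean_sub_pos hX hε hα).le⟩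

theorem sq_le_integral_sub_sq_of_huberMean_eq (hX : MemLp X 2 P) (hα : 0 ≤ α) {s t : ℝ}
    (hst : s ≠ t) (h : huberMean P X α s = huberMean P X α t) :
    α ^ 2 ≤ ∫ ω, (X ω - t) ^ 2 ∂P := by
  have hsat : ∀ᵐ ω ∂P, α ^ 2 ≤ (X ω - t) ^ 2 := by
    filter_upwards [ae_huberScore_eq_of_huberMean_eq hX.aestronglyMeasurable hα h] with ω hω
    rw [← sq_abs (X ω - t)]
    exact pow_le_pow_left₀ hα (le_abs_of_huberScore_eq (by grind) hω.symm) 2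
  simpa using integral_mono_ae (integrable_const (α ^ 2))
    (hX.sub (memLp_const t)).integrable_sq hsat

theorem existsUnique_huberMean_eq_zero (hX : MemLp X 2 P) (hα : Var[X; P] + 1 < α) :
    ∃! t, huberMean P X α t = 0 := by
  have hα' : Var[X; P] + 1 ^ 2 < α * 1 := by simpa using hα
  obtain ⟨t, ht⟩ := exists_huberMean_eq_zero hX one_pos hα'
  refine ⟨t, ht, fun s hs ↦ by_contra fun hst ↦ ?_⟩
  have hsq := sq_le_integral_sub_sq_of_huberMean_eq hX (by linarith [variance_nonneg X P]) hst
    (hs.trans ht.symm)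
  have hclose : (P[X] - t) ^ 2 < 1 := by
    rw [← sq_abs, abs_sub_comm, sq_lt_one_iff_abs_lt_one, abs_abs]
    exact abs_sub_mean_lt_of_huberMean_eq_zero hX one_pos hα' ht
  rw [integral_sub_const_sq hX] at hsq
  nlinarith [variance_nonneg X P]

end Zeros

theorem huber_zero_exists_unique_tendsto_general {Ω : Type*} [MeasureSpace Ω]
    [IsProbabilityMeasure (volume : Measure Ω)]
    (X : Ω → ℝ)
    (μ : ℝ) (hμ : ∫ ω, X ω = μ) (hXL2 : MemLp X 2)
    (α : ℕ → ℝ) (hα : Tendsto α atTop atTop) :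
    ∃ N : ℕ, ∃ t : ℕ → ℝ,
      (∀ n ≥ N, (∫ ω, huberScore (α n) (X ω - t n)) = 0 ∧
        ∀ s : ℝ, (∫ ω, huberScore (α n) (X ω - s)) = 0 → s = t n) ∧
      Tendsto t atTop (nhds μ) := by
  subst hμ
  have hlarge (ε : ℝ) (hε : 0 < ε) : ∀ᶠ n in atTop, Var[X; volume] + ε ^ 2 < α n * ε :=
    (hα.eventually_gt_atTop ((Var[X; volume] + ε ^ 2) / ε)).mono fun _ hn ↦ (div_lt_iff₀ hε).1 hn
  obtain ⟨N, hN⟩ := eventually_atTop.1 (hα.eventually_gt_atTop (Var[X; volume] + 1))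
  have hunique (n) (hn : n ≥ N) := existsUnique_huberMean_eq_zero hXL2 (hN n hn)
  let t n := Classical.epsilon fun s ↦ huberMean volume X (α n) s = 0
  have ht (n) (hn : n ≥ N) : huberMean volume X (α n) (t n) = 0 :=
    Classical.epsilon_spec (hunique n hn).exists
  refine ⟨N, t, fun n hn ↦ ⟨ht n hn, fun s hs ↦ (hunique n hn).unique hs (ht n hn)⟩, ?_⟩
  refine Metric.tendsto_nhds.2 fun ε hε ↦ ?_
  filter_upwards [hlarge ε hε, eventually_ge_atTop N] with n hn hNn
  exact abs_sub_mean_lt_of_huberMean_eq_zero hXL2 hε hn (ht n hNn)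

/-- for `X` with mean `μ` and finite variance and `α_n → ∞`, eventually
`λ_n(t) = E ψ_{α_n}(X − t)` has a unique zero `t_n`, and `t_n → μ`. -/
theorem huber_zero_exists_unique_tendsto {Ω : Type*} [MeasureSpace Ω]
    [IsProbabilityMeasure (volume : Measure Ω)]
    (X : Ω → ℝ) (hXmeas : Measurable X) (hXint : Integrable X)
    (μ : ℝ) (hμ : ∫ ω, X ω = μ) (hXL2 : MemLp X 2)
    (α : ℕ → ℝ) (hαpos : ∀ n, 0 < α n) (hα : Tendsto α atTop atTop) :
    ∃ N : ℕ, ∃ t : ℕ → ℝ,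
      (∀ n ≥ N, (∫ ω, huberScore (α n) (X ω - t n)) = 0 ∧
        ∀ s : ℝ, (∫ ω, huberScore (α n) (X ω - s)) = 0 → s = t n) ∧
      Tendsto t atTop (nhds μ) :=
  huber_zero_exists_unique_tendsto_general X μ hμ hXL2 α hα
end
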